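/- The expectation of A_∞ with respect to (r,θ) uniform on [-1/√2,1/√2] × [0,2π) equals 1/2; i.e., (1/(2π√2)) ∫_0^{2π} ∫_{-1/√2}^{1/√2} A_∞(r,θ) dr dθ = 1/2. -/

import Mathlib

open Real MeasureTheory

/-- The unit square tilted by angle `θ` and centered at `(r, 0)`. -/
noncomputable def tiltedSquare (r θ : ℝ) : Set (ℝ × ℝ) :=
  {p | ∃ x y : ℝ, |x| ≤ 1/2 ∧ |y| ≤ 1/2 ∧
    p = (r + x * Real.cos θ - y * Real.sin θ, x * Real.sin θ + y * Real.cos θ)}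

/-- The area of the portion of the tilted shifted unit square lying in the left half-plane. -/
noncomputable def Ainf (r θ : ℝ) : ℝ :=
  (volume (tiltedSquare r θ ∩ {p : ℝ × ℝ | p.1 ≤ 0})).toReal

open Pointwise

noncomputable def rotL (θ : ℝ) : (ℝ × ℝ) →ₗ[ℝ] (ℝ × ℝ) where
  toFun p := (p.1 * Real.cos θ - p.2 * Real.sin θ, p.1 * Real.sin θ + p.2 * Real.cos θ)
  map_add' p q := by simp [Prod.ext_iff]; constructor <;> ring
  map_smul' c p := by simp [Prod.ext_iff]; constructor <;> ring

theorem rotL_det (θ : ℝ) : LinearMap.det (rotL θ) = 1 := by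
  have h : LinearMap.toMatrix (Module.Basis.finTwoProd ℝ) (Module.Basis.finTwoProd ℝ) (rotL θ)
      = !![Real.cos θ, -Real.sin θ; Real.sin θ, Real.cos θ] := by
    ext i j
    fin_cases i <;> fin_cases j <;>
      simp [LinearMap.toMatrix_apply, rotL]
  rw [← LinearMap.det_toMatrix (Module.Basis.finTwoProd ℝ), h, Matrix.det_fin_two_of]
  have := Real.sin_sq_add_cos_sq θ; nlinarith

theorem vol_image_rot (θ : ℝ) (s : Set (ℝ × ℝ)) : volume (rotL θ '' s) = volume s := by
  rw [Measure.addHaar_image_linearMap, rotL_det]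
  simp

def sq0 : Set (ℝ × ℝ) := Set.Icc (-(1/2)) (1/2) ×ˢ Set.Icc (-(1/2)) (1/2)

theorem tiltedSquare_eq (r θ : ℝ) :
    tiltedSquare r θ = (fun p : ℝ × ℝ => ((r, 0) : ℝ × ℝ) + p) '' (rotL θ '' sq0) := by
  ext p
  constructor
  · rintro ⟨x, y, hx, hy, rfl⟩
    rw [abs_le] at hx hy
    refine ⟨(x * Real.cos θ - y * Real.sin θ, x * Real.sin θ + y * Real.cos θ),
      ⟨(x, y), ⟨Set.mem_Icc.2 hx, Set.mem_Icc.2 hy⟩, rfl⟩, ?_⟩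
    simp [Prod.ext_iff]; ring
  · rintro ⟨q, ⟨⟨x, y⟩, ⟨hx, hy⟩, rfl⟩, rfl⟩
    rw [Set.mem_Icc] at hx hy
    exact ⟨x, y, abs_le.2 hx, abs_le.2 hy, by simp [rotL, Prod.ext_iff]; ring⟩

theorem vol_tiltedSquare (r θ : ℝ) : volume (tiltedSquare r θ) = 1 := by
  rw [tiltedSquare_eq]
  rw [show (fun p : ℝ × ℝ => ((r, 0) : ℝ × ℝ) + p) '' (rotL θ '' sq0)
      = ((r, 0) : ℝ × ℝ) +ᵥ (rotL θ '' sq0) by rfl]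
  rw [measure_vadd, vol_image_rot, sq0, Measure.volume_eq_prod, Measure.prod_prod,
    Real.volume_Icc]
  norm_num

theorem vol_Ainf_eq (r θ : ℝ) :
    volume (tiltedSquare r θ ∩ {p : ℝ × ℝ | p.1 ≤ 0})
      = volume (tiltedSquare 0 θ ∩ {p : ℝ × ℝ | p.1 ≤ -r}) := by
  have hpre : (fun p : ℝ × ℝ => ((r, 0) : ℝ × ℝ) + p) ⁻¹'
      (tiltedSquare r θ ∩ {p : ℝ × ℝ | p.1 ≤ 0})
      = tiltedSquare 0 θ ∩ {p : ℝ × ℝ | p.1 ≤ -r} := by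
    ext p
    simp only [Set.mem_preimage, Set.mem_inter_iff, Set.mem_setOf_eq, tiltedSquare]
    constructor
    · rintro ⟨⟨x, y, hx, hy, hp⟩, h2⟩
      rw [Prod.ext_iff] at hp
      simp at hp
      refine ⟨⟨x, y, hx, hy, ?_⟩, ?_⟩
      · rw [Prod.ext_iff]; constructor
        · simp; linarith [hp.1]
        · simpa using hp.2
      · simp at h2 ⊢; linarith [h2]
    · rintro ⟨⟨x, y, hx, hy, hp⟩, h2⟩
      rw [Prod.ext_iff] at hp
      simp at hp
      refine ⟨⟨x, y, hx, hy, ?_⟩, ?_⟩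
      · rw [Prod.ext_iff]; constructor
        · simp; linarith [hp.1]
        · simpa using hp.2
      · simp at h2 ⊢; linarith [h2]
  rw [← hpre, measure_preimage_add]

theorem Ainf_eq (r θ : ℝ) :
    Ainf r θ = (volume (tiltedSquare 0 θ ∩ {p : ℝ × ℝ | p.1 ≤ -r})).toReal := by
  rw [Ainf, vol_Ainf_eq]

theorem vol_Ainf_ne_top (r θ : ℝ) :
    volume (tiltedSquare r θ ∩ {p : ℝ × ℝ | p.1 ≤ 0}) ≠ ⊤ := by
  refine ne_top_of_le_ne_top ?_ (measure_mono Set.inter_subset_left)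
  rw [vol_tiltedSquare]; exact ENNReal.one_ne_top

theorem Ainf_antitone (θ : ℝ) : Antitone (fun r => Ainf r θ) := by
  intro r r' h
  simp only [Ainf_eq]
  have h1 : volume (tiltedSquare 0 θ ∩ {p : ℝ × ℝ | p.1 ≤ -r'})
      ≤ volume (tiltedSquare 0 θ ∩ {p : ℝ × ℝ | p.1 ≤ -r}) := by
    apply measure_mono
    intro p hp
    refine ⟨hp.1, ?_⟩
    have := hp.2
    simp only [Set.mem_setOf_eq] at this ⊢
    linarith
  exact ENNReal.toReal_mono (by rw [← vol_Ainf_eq]; exact vol_Ainf_ne_top r θ) h1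

theorem rotL_pi : ⇑(rotL π) = fun p : ℝ × ℝ => -p := by
  funext p
  simp [rotL, Prod.ext_iff]

theorem vol_neg_image (s : Set (ℝ × ℝ)) : volume ((fun p : ℝ × ℝ => -p) '' s) = volume s := by
  rw [← rotL_pi]
  exact vol_image_rot π s

theorem neg_set_eq (r θ : ℝ) :
    tiltedSquare (-r) θ ∩ {p : ℝ × ℝ | p.1 ≤ 0}
      = (fun p : ℝ × ℝ => -p) '' (tiltedSquare r θ ∩ {p : ℝ × ℝ | 0 ≤ p.1}) := by
  ext p
  constructor
  · rintro ⟨⟨x, y, hx, hy, hp⟩, h2⟩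
    refine ⟨-p, ⟨⟨-x, -y, by simpa using hx, by simpa using hy, ?_⟩, ?_⟩, by simp⟩
    · rw [hp]; simp [Prod.ext_iff]; constructor <;> ring
    · simp only [Set.mem_setOf_eq] at h2 ⊢
      simp; exact h2
  · rintro ⟨q, ⟨⟨x, y, hx, hy, hq⟩, h2⟩, rfl⟩
    refine ⟨⟨-x, -y, by simpa using hx, by simpa using hy, ?_⟩, ?_⟩
    · rw [hq]; simp [Prod.ext_iff]; constructor <;> ring
    · simp only [Set.mem_setOf_eq] at h2 ⊢
      simp; exact h2

theorem tiltedSquare_compact (r θ : ℝ) : IsCompact (tiltedSquare r θ) := by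
  rw [tiltedSquare_eq]
  exact (((isCompact_Icc.prod isCompact_Icc).image (rotL θ).continuous_of_finiteDimensional).image
    (continuous_const.add continuous_id))

theorem vol_line : volume {p : ℝ × ℝ | p.1 = 0} = 0 := by
  have : {p : ℝ × ℝ | p.1 = 0} = ({0} : Set ℝ) ×ˢ (Set.univ : Set ℝ) := by
    ext p
    constructor
    · intro h; exact ⟨h, Set.mem_univ _⟩
    · rintro ⟨h, -⟩; exact h
  rw [this, Measure.volume_eq_prod, Measure.prod_prod]
  simp

theorem Ainf_add_neg (r θ : ℝ) : Ainf r θ + Ainf (-r) θ = 1 := by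
  have hB : volume (tiltedSquare (-r) θ ∩ {p : ℝ × ℝ | p.1 ≤ 0})
      = volume (tiltedSquare r θ ∩ {p : ℝ × ℝ | 0 ≤ p.1}) := by
    rw [neg_set_eq, vol_neg_image]
  have hmeas : MeasurableSet (tiltedSquare r θ ∩ {p : ℝ × ℝ | 0 ≤ p.1}) := by
    exact ((tiltedSquare_compact r θ).measurableSet).inter
      (isClosed_le continuous_const continuous_fst).measurableSet
  have hunion : (tiltedSquare r θ ∩ {p : ℝ × ℝ | p.1 ≤ 0})
      ∪ (tiltedSquare r θ ∩ {p : ℝ × ℝ | 0 ≤ p.1}) = tiltedSquare r θ := by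
    ext p
    simp only [Set.mem_union, Set.mem_inter_iff, Set.mem_setOf_eq]
    constructor
    · rintro (⟨h, _⟩ | ⟨h, _⟩) <;> exact h
    · intro h
      rcases le_total p.1 0 with h2 | h2
      · exact Or.inl ⟨h, h2⟩
      · exact Or.inr ⟨h, h2⟩
  have hinter : volume ((tiltedSquare r θ ∩ {p : ℝ × ℝ | p.1 ≤ 0})
      ∩ (tiltedSquare r θ ∩ {p : ℝ × ℝ | 0 ≤ p.1})) = 0 := by
    refine measure_mono_null ?_ vol_line
    rintro p ⟨⟨_, h1⟩, _, h2⟩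
    exact le_antisymm h1 h2
  have key := measure_union_add_inter (μ := volume)
    (tiltedSquare r θ ∩ {p : ℝ × ℝ | p.1 ≤ 0}) hmeas
  rw [hunion, hinter, vol_tiltedSquare, add_zero] at key
  rw [Ainf, Ainf, hB, ← ENNReal.toReal_add (vol_Ainf_ne_top r θ)
    (by rw [← hB]; exact vol_Ainf_ne_top (-r) θ), ← key]
  simp

theorem inner_integral (θ : ℝ) :
    ∫ r in (-(1/Real.sqrt 2))..(1/Real.sqrt 2), Ainf r θ = 1/Real.sqrt 2 := by
  set a := 1/Real.sqrt 2 with ha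
  have hA := Ainf_antitone θ
  have hint : IntervalIntegrable (fun r => Ainf r θ) volume (-a) a :=
    hA.intervalIntegrable
  have hmono : Monotone (fun r => Ainf (-r) θ) := fun r r' h => hA (by linarith)
  have hint2 : IntervalIntegrable (fun r => Ainf (-r) θ) volume (-a) a :=
    hmono.intervalIntegrable
  have hneg : (∫ r in (-a)..a, Ainf (-r) θ) = ∫ r in (-a)..a, Ainf r θ := by
    rw [intervalIntegral.integral_comp_neg (fun r => Ainf r θ), neg_neg]
  have hsum : (∫ r in (-a)..a, Ainf r θ) + (∫ r in (-a)..a, Ainf (-r) θ)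
      = ∫ r in (-a)..a, (1:ℝ) := by
    rw [← intervalIntegral.integral_add hint hint2]
    apply intervalIntegral.integral_congr
    intro x _
    exact Ainf_add_neg x θ
  rw [hneg] at hsum
  have hone : (∫ r in (-a)..a, (1:ℝ)) = 2*a := by
    simp [intervalIntegral.integral_const]; ring
  linarith [hsum, hone]

theorem Ainf_expectation :
    (1/(2*π*Real.sqrt 2)) *
      ∫ θ in (0:ℝ)..(2*π), ∫ r in (-(1/Real.sqrt 2))..(1/Real.sqrt 2), Ainf r θ = 1/2 := by
  have h1 : (∫ θ in (0:ℝ)..(2*π), ∫ r in (-(1/Real.sqrt 2))..(1/Real.sqrt 2), Ainf r θ)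
      = ∫ _ in (0:ℝ)..(2*π), (1/Real.sqrt 2 : ℝ) := by
    apply intervalIntegral.integral_congr
    intro θ _
    exact inner_integral θ
  rw [h1, intervalIntegral.integral_const]
  have hs : Real.sqrt 2 * Real.sqrt 2 = 2 := Real.mul_self_sqrt (by norm_num)
  have hπ : π ≠ 0 := Real.pi_ne_zero
  have hs0 : Real.sqrt 2 ≠ 0 := by positivity
  simp only [smul_eq_mul, sub_zero]
  field_simp
  nlinarith [hs, Real.pi_pos]
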